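/- arXiv:1803.05013 — 2 statements merged into one kernel-verified Lean document; each statement's English description precedes it below -/
import Mathlib

section
/- (Relation between left ABR and ABC derivatives) Let 0 < α < 1, B(α) > 0, and let f : [0,b] → ℝ be continuously differentiable. Then ^{ABC}_0 D^α f(t) = ^{ABR}_0 D^α f(t) − (B(α)/(1-α)) f(0) E_α(-(α/(1-α)) t^α) for t ∈ (0,b). -/
/-!
Substituting `u = x - s` turns `x ↦ ∫₀ˣ f(s) K(x - s) ds` into `x ↦ ∫₀ˣ f(x - u) K(u) du`, in
which the merely continuous kernel `K(u) = E_α(-α/(1-α) u^α)` no longer depends on `x`.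
Differentiating under the integral sign and at the moving endpoint gives
`∫₀ᵗ f'(t - u) K(u) du + f(0) K(t)`, and substituting back yields the ABC derivative plus the
boundary term. To differentiate at the lower end of `[0, b]`, `f` is first extended to a `C¹`
function on `ℝ`. The only property of `E_α` needed is its continuity, which follows from
`Γ(αk + 1) ≥ q^{αk} e^{-q}` for every `q ≥ 0`.
-/

open intervalIntegral

/-- One-parameter Mittag-Leffler function. -/
noncomputable def mittagLeffler (α z : ℝ) : ℝ :=
  ∑' k : ℕ, z ^ k / Real.Gamma (α * k + 1)

/-- Left ABC fractional derivative with Mittag-Leffler kernel (base point `a`). -/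
noncomputable def ABCleft (B α a : ℝ) (f : ℝ → ℝ) (t : ℝ) : ℝ :=
  (B / (1 - α)) * ∫ s in a..t, deriv f s * mittagLeffler α (-(α / (1 - α)) * (t - s) ^ α)

/-- Left ABR fractional derivative with Mittag-Leffler kernel (base point `a`). -/
noncomputable def ABRleft (B α a : ℝ) (f : ℝ → ℝ) (t : ℝ) : ℝ :=
  (B / (1 - α)) *
    deriv (fun x => ∫ s in a..x, f s * mittagLeffler α (-(α / (1 - α)) * (x - s) ^ α)) t

open Real Set Filter Topology MeasureTheory

theorem rpow_mul_exp_neg_le_Gamma_add_one {x q : ℝ} (hx : 0 ≤ x) (hq : 0 ≤ q) :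
    q ^ x * exp (-q) ≤ Gamma (x + 1) := by
  have hint : IntegrableOn (fun t => exp (-t) * t ^ x) (Ioi 0) := by
    simpa using GammaIntegral_convergent (s := x + 1) (by linarith)
  rw [Gamma_eq_integral (by linarith), add_sub_cancel_right, ← integral_exp_neg_Ioi,
    ← MeasureTheory.integral_const_mul]
  calc ∫ t in Ioi q, q ^ x * exp (-t)
      ≤ ∫ t in Ioi q, exp (-t) * t ^ x := by
        refine setIntegral_mono_on ((integrableOn_exp_neg_Ioi q).const_mul _)
          (hint.mono_set (Ioi_subset_Ioi hq)) measurableSet_Ioi fun t ht => ?_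
        rw [mul_comm]
        exact mul_le_mul_of_nonneg_left (rpow_le_rpow hq ht.le hx) (exp_pos _).le
    _ ≤ ∫ t in Ioi 0, exp (-t) * t ^ x :=
        setIntegral_mono_set hint
          (ae_restrict_of_forall_mem measurableSet_Ioi fun t ht =>
            mul_nonneg (exp_pos _).le (rpow_nonneg ht.le _))
          (Ioi_subset_Ioi hq).eventuallyLE

theorem summable_pow_div_Gamma_mul_add_one {α : ℝ} (hα : 0 < α) (z : ℝ) :
    Summable fun k : ℕ => z ^ k / Gamma (α * k + 1) := by
  -- choose `q` with `q ^ α = 2 |z| + 1`, so that `|z| / q ^ α ≤ 1 / 2`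
  set q := (2 * |z| + 1) ^ α⁻¹
  have hq : 0 ≤ q := by positivity
  have hqα : q ^ α = 2 * |z| + 1 := by
    rw [← rpow_mul (by positivity), inv_mul_cancel₀ hα.ne', rpow_one]
  have hratio : |z| / q ^ α ≤ 1 / 2 := by
    rw [hqα, div_le_div_iff₀ (by positivity) two_pos]; linarith
  refine Summable.of_norm_bounded ((summable_geometric_two).mul_left (exp q)) fun k => ?_
  have hΓ := rpow_mul_exp_neg_le_Gamma_add_one (x := α * k) (by positivity) hq
  calc ‖z ^ k / Gamma (α * k + 1)‖ = |z| ^ k / Gamma (α * k + 1) := by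
        rw [norm_div, norm_pow, Real.norm_eq_abs,
          Real.norm_of_nonneg (hΓ.trans' (by positivity))]
    _ ≤ |z| ^ k / (q ^ (α * k) * exp (-q)) := by gcongr
    _ = exp q * (|z| / q ^ α) ^ k := by
        rw [rpow_mul hq, rpow_natCast, exp_neg, div_pow]; field_simp
    _ ≤ exp q * (1 / 2) ^ k := by gcongr

theorem continuous_mittagLeffler {α : ℝ} (hα : 0 < α) : Continuous (mittagLeffler α) := by
  refine continuous_iff_continuousAt.2 fun z => ?_
  have hon : ContinuousOn (mittagLeffler α) (Metric.ball 0 (|z| + 1)) := by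
    refine continuousOn_tsum (fun k => (continuous_pow k).continuousOn.div_const _)
      (summable_pow_div_Gamma_mul_add_one hα (|z| + 1)) fun k w hw => ?_
    rw [mem_ball_zero_iff, Real.norm_eq_abs] at hw
    have hΓ : 0 < Gamma (α * k + 1) := Gamma_pos_of_pos (by positivity)
    rw [norm_div, norm_pow, Real.norm_eq_abs, Real.norm_of_nonneg hΓ.le]
    gcongr
  exact hon.continuousAt (Metric.isOpen_ball.mem_nhds (by simp))

theorem hasDerivAt_integral_of_continuous_uncurry {E : Type*} [NormedAddCommGroup E]
    [NormedSpace ℝ E] [CompleteSpace E] {φ : ℝ → ℝ → E} (hφ : Continuous (Function.uncurry φ))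
    (a : ℝ) :
    HasDerivAt (fun x => ∫ u in a..x, φ x u) (φ a a) a := by
  rw [hasDerivAt_iff_isLittleO, Asymptotics.isLittleO_iff]
  intro ε hε
  obtain ⟨δ, hδ, hclose⟩ := Metric.continuousAt_iff.1 (hφ.continuousAt (x := (a, a))) ε hε
  filter_upwards [Metric.ball_mem_nhds a hδ] with x hx
  have hφx : Continuous (φ x) := hφ.comp (Continuous.prodMk_right x)
  rw [integral_same, sub_zero, ← intervalIntegral.integral_const,
    ← integral_sub (hφx.intervalIntegrable _ _) intervalIntegrable_const]
  refine norm_integral_le_of_norm_le_const fun u hu => ?_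
  have hua : |u - a| ≤ |x - a| := abs_sub_left_of_mem_uIcc (uIoc_subset_uIcc hu)
  rw [← dist_eq_norm]
  refine (hclose (x := (x, u)) ?_).le
  rw [Prod.dist_eq, max_lt_iff, Real.dist_eq, Real.dist_eq]
  rw [Metric.mem_ball, Real.dist_eq] at hx
  exact ⟨hx, hua.trans_lt hx⟩

theorem hasDerivAt_integral_comp_sub_mul {F F' K : ℝ → ℝ} (hF : ∀ x, HasDerivAt F (F' x) x)
    (hF' : Continuous F') (hK : Continuous K) (a t : ℝ) :
    HasDerivAt (fun x => ∫ u in a..x, F (x - u) * K u)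
      ((∫ u in a..t, F' (t - u) * K u) + F 0 * K t) t := by
  have hFc : Continuous F := continuous_iff_continuousAt.2 fun x => (hF x).continuousAt
  have hcont : Continuous fun p : ℝ × ℝ => F (p.1 - p.2) * K p.2 := by fun_prop
  have hcont' : Continuous fun p : ℝ × ℝ => F' (p.1 - p.2) * K p.2 := by fun_prop
  obtain ⟨C, hC⟩ := ((isCompact_closedBall t 1).prod (isCompact_uIcc (a := a) (b := t)))
    |>.exists_bound_of_continuousOn hcont'.continuousOn
  have hfixed : HasDerivAt (fun x => ∫ u in a..t, F (x - u) * K u)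
      (∫ u in a..t, F' (t - u) * K u) t := by
    refine (hasDerivAt_integral_of_dominated_loc_of_deriv_le (μ := volume) (bound := fun _ => C)
      (F := fun x u => F (x - u) * K u) (F' := fun x u => F' (x - u) * K u)
      (Metric.ball_mem_nhds t one_pos) ?_ ?_ ?_ ?_ intervalIntegrable_const ?_).2
    · exact Eventually.of_forall fun x =>
        (hcont.comp (Continuous.prodMk_right x)).aestronglyMeasurable
    · exact (hcont.comp (Continuous.prodMk_right t)).intervalIntegrable _ _
    · exact (hcont'.comp (Continuous.prodMk_right t)).aestronglyMeasurable
    · exact ae_of_all _ fun u hu x hx =>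
        hC (x, u) ⟨Metric.ball_subset_closedBall hx, uIoc_subset_uIcc hu⟩
    · exact ae_of_all _ fun u _ x _ => by
        simpa using ((hF (x - u)).comp x ((hasDerivAt_id x).sub_const u)).mul_const (K u)
  have hmoving : HasDerivAt (fun x => ∫ u in t..x, F (x - u) * K u) (F 0 * K t) t := by
    simpa using hasDerivAt_integral_of_continuous_uncurry
      (φ := fun x u => F (x - u) * K u) hcont t
  refine (hfixed.add hmoving).congr_of_eventuallyEq (Eventually.of_forall fun x => ?_)
  have hx := (hcont.comp (Continuous.prodMk_right x)).intervalIntegrable (μ := volume)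
  exact (integral_add_adjacent_intervals (hx a t) (hx t x)).symm

theorem ContDiffOn.exists_hasDerivAt_eqOn_Icc {f : ℝ → ℝ} {a b : ℝ} (hab : a < b)
    (hf : ContDiffOn ℝ 1 f (Icc a b)) :
    ∃ F F' : ℝ → ℝ, (∀ x, HasDerivAt F (F' x) x) ∧ Continuous F' ∧ EqOn F f (Icc a b) := by
  set g := derivWithin f (Icc a b)
  -- extend `g` by constants outside `[a, b]` and integrate
  set F' : ℝ → ℝ := fun x => g (projIcc a b hab.le x)
  have hF' : Continuous F' :=
    (hf.continuousOn_derivWithin (uniqueDiffOn_Icc hab) le_rfl).comp_continuous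
      (continuous_subtype_val.comp continuous_projIcc) fun x => (projIcc a b hab.le x).2
  refine ⟨fun x => f a + ∫ s in a..x, F' s, F',
    fun x => (hF'.integral_hasStrictDerivAt a x).hasDerivAt.const_add _, hF', fun y hy => ?_⟩
  have hderiv : ∀ x ∈ Ioo a y, HasDerivAt f (F' x) x := fun x hx => by
    have hx' : x ∈ Icc a b := ⟨hx.1.le, hx.2.le.trans hy.2⟩
    rw [show F' x = g x by simp only [F', projIcc_of_mem _ hx']]
    exact (hf.differentiableOn one_ne_zero x hx').hasDerivWithinAt.hasDerivAt
      (Icc_mem_nhds hx.1 (hx.2.trans_le hy.2))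
  simp only [integral_eq_sub_of_hasDerivAt_of_le hy.1
    (hf.continuousOn.mono (Icc_subset_Icc_right hy.2)) hderiv (hF'.intervalIntegrable _ _),
    add_sub_cancel]

theorem integral_mul_comp_sub_eq (g K : ℝ → ℝ) (x : ℝ) :
    ∫ s in (0 : ℝ)..x, g s * K (x - s) = ∫ u in (0 : ℝ)..x, g (x - u) * K u := by
  simpa using (integral_comp_sub_left (fun s => g s * K (x - s)) x (a := 0) (b := x)).symm

theorem deriv_integral_mul_comp_sub {f K : ℝ → ℝ} {b t : ℝ} (hf : ContDiffOn ℝ 1 f (Icc 0 b))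
    (hK : Continuous K) (ht : t ∈ Ioo 0 b) :
    deriv (fun x => ∫ s in (0 : ℝ)..x, f s * K (x - s)) t
      = (∫ s in (0 : ℝ)..t, deriv f s * K (t - s)) + f 0 * K t := by
  obtain ⟨F, F', hF, hF', hFf⟩ := hf.exists_hasDerivAt_eqOn_Icc (ht.1.trans ht.2)
  have hlocal : (fun x => ∫ s in (0 : ℝ)..x, f s * K (x - s))
      =ᶠ[𝓝 t] fun x => ∫ u in (0 : ℝ)..x, F (x - u) * K u := by
    filter_upwards [Ioo_mem_nhds ht.1 ht.2] with x hx
    rw [← integral_mul_comp_sub_eq]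
    refine integral_congr fun s hs => ?_
    rw [uIcc_of_le hx.1.le] at hs
    rw [hFf ⟨hs.1, hs.2.trans hx.2.le⟩]
  have hderiv : ∀ s ∈ Ioo 0 b, deriv f s = F' s := fun s hs => by
    have hfF : f =ᶠ[𝓝 s] F := eventually_of_mem (Ioo_mem_nhds hs.1 hs.2)
      fun y hy => (hFf ⟨hy.1.le, hy.2.le⟩).symm
    rw [hfF.deriv_eq, (hF s).deriv]
  rw [hlocal.deriv_eq, (hasDerivAt_integral_comp_sub_mul hF hF' hK 0 t).deriv,
    ← integral_mul_comp_sub_eq, hFf ⟨le_rfl, (ht.1.trans ht.2).le⟩]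
  congr 1
  refine integral_congr_ae (ae_of_all _ fun s hs => ?_)
  rw [uIoc_of_le ht.1.le] at hs
  rw [hderiv s ⟨hs.1, hs.2.trans_lt ht.2⟩]

theorem ABC_eq_ABR_sub_boundary_general (b α B : ℝ)
    (hα0 : 0 < α) (f : ℝ → ℝ)
    (hf : ContDiffOn ℝ 1 f (Set.Icc 0 b)) :
    ∀ t ∈ Set.Ioo 0 b,
      ABCleft B α 0 f t
        = ABRleft B α 0 f t
          - (B / (1 - α)) * f 0 * mittagLeffler α (-(α / (1 - α)) * t ^ α) := by
  intro t ht
  have hK : Continuous fun u : ℝ => mittagLeffler α (-(α / (1 - α)) * u ^ α) :=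
    (continuous_mittagLeffler hα0).comp (continuous_const.mul (continuous_rpow_const hα0.le))
  rw [ABCleft, ABRleft, deriv_integral_mul_comp_sub hf hK ht]
  ring

/-- Relation between the left ABR and ABC fractional derivatives (base point `0`). -/
theorem ABC_eq_ABR_sub_boundary (b α B : ℝ) (hb : 0 < b)
    (hα0 : 0 < α) (hα1 : α < 1) (hB : 0 < B) (f : ℝ → ℝ)
    (hf : ContDiffOn ℝ 1 f (Set.Icc 0 b)) :
    ∀ t ∈ Set.Ioo 0 b,
      ABCleft B α 0 f t
        = ABRleft B α 0 f t
          - (B / (1 - α)) * f 0 * mittagLeffler α (-(α / (1 - α)) * t ^ α) :=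
  ABC_eq_ABR_sub_boundary_general b α B hα0 f hf
end

section
/- (Orthogonality of eigenfunctions, discrete ABR case) Let a, b ∈ ℤ with b - a ≥ 2, α ∈ (0,1/2), p, q, r : {a,...,b} → ℝ with p > 0 and r > 0. If λ₁ ≠ λ₂ are real numbers and x₁, x₂ : {a,...,b} → ℝ satisfy ^{ABR}_a∇^α (p(t) · ^{ABR}∇_b^α xᵢ(t)) + q(t)xᵢ(t) = λᵢ r(t) xᵢ(t) for all t ∈ {a+1,...,b-1} (i = 1,2), then Σ_{t=a+1}^{b-1} r(t) x₁(t) x₂(t) = 0. -/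
/-- Nabla discrete Mittag-Leffler function
`E_{\overline{α}}(λ, z) = Σ_{k=0}^∞ λ^k z^{\overline{kα}} / Γ(kα+1)`,
with the rising function `z^{\overline{β}} = Γ(z+β)/Γ(z)`. -/
noncomputable def dML (α lam z : ℝ) : ℝ :=
  ∑' k : ℕ, lam ^ k * (Real.Gamma (z + k * α) / Real.Gamma z) / Real.Gamma (k * α + 1)

/-- Left ABR nabla fractional difference
`^{ABR}_a∇^α g(t) = (B/(1-α)) ∇_t Σ_{s=a+1}^t g(s) E_{\overline{α}}(-α/(1-α), t-s+1)`. -/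
noncomputable def ABRnablaLeft (B α : ℝ) (a : ℤ) (g : ℤ → ℝ) (t : ℤ) : ℝ :=
  (B / (1 - α)) *
    ((fun τ : ℤ => ∑ s ∈ Finset.Icc (a + 1) τ,
        g s * dML α (-(α / (1 - α))) ((τ : ℝ) - (s : ℝ) + 1)) t
     - (fun τ : ℤ => ∑ s ∈ Finset.Icc (a + 1) τ,
        g s * dML α (-(α / (1 - α))) ((τ : ℝ) - (s : ℝ) + 1)) (t - 1))

/-- Right ABR nabla fractional difference
`^{ABR}∇_b^α f(t) = -(B/(1-α)) Δ_t Σ_{s=t}^{b-1} f(s) E_{\overline{α}}(-α/(1-α), s-t+1)`. -/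
noncomputable def ABRnablaRight (B α : ℝ) (b : ℤ) (f : ℤ → ℝ) (t : ℤ) : ℝ :=
  -(B / (1 - α)) *
    ((fun τ : ℤ => ∑ s ∈ Finset.Icc τ (b - 1),
        f s * dML α (-(α / (1 - α))) ((s : ℝ) - (τ : ℝ) + 1)) (t + 1)
     - (fun τ : ℤ => ∑ s ∈ Finset.Icc τ (b - 1),
        f s * dML α (-(α / (1 - α))) ((s : ℝ) - (τ : ℝ) + 1)) t)

/-- The discrete fractional Sturm–Liouville operator `L₂`. -/
noncomputable def dSLop (B α : ℝ) (a b : ℤ) (p q : ℤ → ℝ) (x : ℤ → ℝ) (t : ℤ) : ℝ :=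
  ABRnablaLeft B α a (fun s => p s * ABRnablaRight B α b x s) t + q t * x t

/-!
Summation by parts turns the ABR Sturm–Liouville operator into a symmetric one on
`{a+1, …, b-1}`: `∑ x₂ (L x₁) = ∑ x₁ (L x₂)`. Pairing the two eigen-equations with the
other eigenfunction then gives `(λ₁ - λ₂) ∑ r x₁ x₂ = 0`.
-/

open Finset

section SummationByParts

variable (a b : ℤ)

lemma sum_Icc_sum_Icc_comm (d : ℤ) (hd : 0 ≤ d) (F : ℤ → ℤ → ℝ) :
    ∑ t ∈ Icc (a + 1) (b - 1), ∑ s ∈ Icc (a + 1) (t - d), F t s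
      = ∑ s ∈ Icc (a + 1) (b - 1), ∑ t ∈ Icc (s + d) (b - 1), F t s :=
  sum_comm' (by intro t s; simp only [mem_Icc]; omega)

variable (B α : ℝ)

lemma ABRnablaLeft_eq (g : ℤ → ℝ) (t : ℤ) :
    ABRnablaLeft B α a g t = B / (1 - α) *
      (∑ s ∈ Icc (a + 1) t, g s * dML α (-(α / (1 - α))) ((t : ℝ) - s + 1)
        - ∑ s ∈ Icc (a + 1) (t - 1), g s * dML α (-(α / (1 - α))) ((t : ℝ) - s)) := by
  have hshift : ∀ s : ℤ, ((t - 1 : ℤ) : ℝ) - s + 1 = (t : ℝ) - s := fun s => by push_cast; ring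
  simp only [ABRnablaLeft, hshift]

lemma ABRnablaRight_eq (f : ℤ → ℝ) (t : ℤ) :
    ABRnablaRight B α b f t = B / (1 - α) *
      (∑ s ∈ Icc t (b - 1), f s * dML α (-(α / (1 - α))) ((s : ℝ) - t + 1)
        - ∑ s ∈ Icc (t + 1) (b - 1), f s * dML α (-(α / (1 - α))) ((s : ℝ) - t)) := by
  have hshift : ∀ s : ℤ, (s : ℝ) - ((t + 1 : ℤ) : ℝ) + 1 = (s : ℝ) - t := fun s => by push_cast; ring
  simp only [ABRnablaRight, hshift]
  ring

theorem sum_mul_ABRnablaLeft (f g : ℤ → ℝ) :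
    ∑ t ∈ Icc (a + 1) (b - 1), f t * ABRnablaLeft B α a g t
      = ∑ t ∈ Icc (a + 1) (b - 1), g t * ABRnablaRight B α b f t := by
  set E := dML α (-(α / (1 - α)))
  have hLeft : ∀ t, f t * ABRnablaLeft B α a g t = B / (1 - α) *
      (∑ s ∈ Icc (a + 1) t, f t * (g s * E (t - s + 1))
        - ∑ s ∈ Icc (a + 1) (t - 1), f t * (g s * E (t - s))) := fun t => by
    rw [ABRnablaLeft_eq, ← mul_sum, ← mul_sum]; ring
  have hRight : ∀ t, g t * ABRnablaRight B α b f t = B / (1 - α) *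
      (∑ s ∈ Icc t (b - 1), f s * (g t * E (s - t + 1))
        - ∑ s ∈ Icc (t + 1) (b - 1), f s * (g t * E (s - t))) := fun t => by
    simp only [ABRnablaRight_eq, mul_left_comm (f _) (g t), ← mul_sum]
    ring
  have hDiag := sum_Icc_sum_Icc_comm a b 0 le_rfl fun t s => f t * (g s * E (t - s + 1))
  have hStrict := sum_Icc_sum_Icc_comm a b 1 zero_le_one fun t s => f t * (g s * E (t - s))
  simp only [sub_zero, add_zero] at hDiag
  rw [sum_congr rfl fun t _ => hLeft t, sum_congr rfl fun t _ => hRight t, ← mul_sum, ← mul_sum,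
    sum_sub_distrib, sum_sub_distrib, hDiag, hStrict]

end SummationByParts

theorem sum_mul_dSLop_comm (B α : ℝ) (a b : ℤ) (p q x y : ℤ → ℝ) :
    ∑ t ∈ Icc (a + 1) (b - 1), y t * dSLop B α a b p q x t
      = ∑ t ∈ Icc (a + 1) (b - 1), x t * dSLop B α a b p q y t := by
  simp only [dSLop, mul_add, sum_add_distrib, sum_mul_ABRnablaLeft]
  congr 1 <;> exact sum_congr rfl fun t _ => by ring

theorem dSL_eigenfunctions_orthogonal_general (a b : ℤ) (α B : ℝ)
    (p q r : ℤ → ℝ)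
    (lam₁ lam₂ : ℝ) (hlam : lam₁ ≠ lam₂) (x₁ x₂ : ℤ → ℝ)
    (heq₁ : ∀ t ∈ Finset.Icc (a + 1) (b - 1), dSLop B α a b p q x₁ t = lam₁ * r t * x₁ t)
    (heq₂ : ∀ t ∈ Finset.Icc (a + 1) (b - 1), dSLop B α a b p q x₂ t = lam₂ * r t * x₂ t) :
    (∑ t ∈ Finset.Icc (a + 1) (b - 1), r t * x₁ t * x₂ t) = 0 := by
  have hpair₁ : ∑ t ∈ Icc (a + 1) (b - 1), x₂ t * dSLop B α a b p q x₁ t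
      = lam₁ * ∑ t ∈ Icc (a + 1) (b - 1), r t * x₁ t * x₂ t := by
    rw [mul_sum]
    exact sum_congr rfl fun t ht => by rw [heq₁ t ht]; ring
  have hpair₂ : ∑ t ∈ Icc (a + 1) (b - 1), x₁ t * dSLop B α a b p q x₂ t
      = lam₂ * ∑ t ∈ Icc (a + 1) (b - 1), r t * x₁ t * x₂ t := by
    rw [mul_sum]
    exact sum_congr rfl fun t ht => by rw [heq₂ t ht]; ring
  have hzero : (lam₁ - lam₂) * ∑ t ∈ Icc (a + 1) (b - 1), r t * x₁ t * x₂ t = 0 := by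
    rw [sub_mul, ← hpair₁, ← hpair₂, sum_mul_dSLop_comm, sub_self]
  exact (mul_eq_zero.mp hzero).resolve_left (sub_ne_zero.mpr hlam)

/-- Orthogonality of eigenfunctions corresponding to distinct eigenvalues for the
discrete ABR fractional Sturm–Liouville equation, with respect to the weight `r`. -/
theorem dSL_eigenfunctions_orthogonal (a b : ℤ) (hab : 2 ≤ b - a) (α B : ℝ)
    (hα0 : 0 < α) (hα2 : α < 1 / 2) (hB : 0 < B)
    (p q r : ℤ → ℝ) (hppos : ∀ t, 0 < p t) (hrpos : ∀ t, 0 < r t)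
    (lam₁ lam₂ : ℝ) (hlam : lam₁ ≠ lam₂) (x₁ x₂ : ℤ → ℝ)
    (heq₁ : ∀ t ∈ Finset.Icc (a + 1) (b - 1), dSLop B α a b p q x₁ t = lam₁ * r t * x₁ t)
    (heq₂ : ∀ t ∈ Finset.Icc (a + 1) (b - 1), dSLop B α a b p q x₂ t = lam₂ * r t * x₂ t) :
    (∑ t ∈ Finset.Icc (a + 1) (b - 1), r t * x₁ t * x₂ t) = 0 :=
  dSL_eigenfunctions_orthogonal_general a b α B p q r lam₁ lam₂ hlam x₁ x₂ heq₁ heq₂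
end
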